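/- For all l ∈ n_l and m ∈ n_b, the partial derivative of the squared apparent from-end power flow |S^fr_l|² (the square of the complex absolute value, i.e. (Re S^fr_l)² + (Im S^fr_l)²) with respect to the angle θ_m exists and equals 2·Re( conj(S^fr_l) · j·( C_{l m}·V_m·conj(I^fr_l) − (Σ_k C_{l k}·V_k)·conj((Y_f)_{l m})·conj(V_m) ) ). -/

import Mathlib

/-!
Only `V_m` depends on `θ_m`, with `∂V_m/∂θ_m = j V_m`; the product rule gives
`∂S^fr_l/∂θ_m`, and `d|S|² = 2 Re(conj S · dS)`.
-/

open Matrix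

/-- Complex bus voltage `V_k = v_k · exp(j θ_k)`. -/
noncomputable def busV {nb : Type*} (v θ : nb → ℝ) (k : nb) : ℂ :=
  (v k : ℂ) * Complex.exp (Complex.I * (θ k : ℂ))

/-- From-end line current `I^fr_l = Σ_k (Y_f)_{l k} V_k`. -/
noncomputable def lineIfr {nl nb : Type*} [Fintype nb] (Yf : Matrix nl nb ℂ)
    (v θ : nb → ℝ) (l : nl) : ℂ :=
  ∑ k, Yf l k * busV v θ k

/-- From-end complex line flow `S^fr_l = (Σ_k C_{l k} V_k) · conj(I^fr_l)`. -/
noncomputable def lineSfr {nl nb : Type*} [Fintype nb] (C Yf : Matrix nl nb ℂ)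
    (v θ : nb → ℝ) (l : nl) : ℂ :=
  (∑ k, C l k * busV v θ k) * (starRingEnd ℂ) (lineIfr Yf v θ l)

theorem Complex.hasDerivAt_normSq {f : ℝ → ℂ} {f' : ℂ} {x : ℝ} (hf : HasDerivAt f f' x) :
    HasDerivAt (fun t => Complex.normSq (f t)) (2 * ((starRingEnd ℂ) (f x) * f').re) x := by
  simpa only [← Complex.sq_norm, Complex.inner, mul_comm f'] using hf.norm_sq

section AngleUpdate

variable {nb : Type*} [DecidableEq nb] (v θ : nb → ℝ) (m : nb)

theorem hasDerivAt_busV_update_self :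
    HasDerivAt (fun t : ℝ => busV v (Function.update θ m t) m) (Complex.I * busV v θ m)
      (θ m) := by
  have hexp : HasDerivAt (fun t : ℝ => Complex.exp (Complex.I * t))
      (Complex.exp (Complex.I * θ m) * Complex.I) (θ m) := by
    simpa using ((hasDerivAt_id (θ m)).ofReal_comp.const_mul Complex.I).cexp
  simpa [busV, mul_left_comm, mul_comm] using hexp.const_mul (v m : ℂ)

theorem hasDerivAt_busV_update (k : nb) :
    HasDerivAt (fun t : ℝ => busV v (Function.update θ m t) k)
      (Pi.single (M := fun _ => ℂ) m (Complex.I * busV v θ m) k) (θ m) := by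
  rcases eq_or_ne k m with rfl | hk
  · simpa using hasDerivAt_busV_update_self v θ k
  · simpa [busV, Function.update_of_ne hk, hk] using hasDerivAt_const (θ m) (busV v θ k)

theorem hasDerivAt_sum_mul_busV_update [Fintype nb] (a : nb → ℂ) :
    HasDerivAt (fun t : ℝ => ∑ k, a k * busV v (Function.update θ m t) k)
      (a m * (Complex.I * busV v θ m)) (θ m) := by
  rw [← dotProduct_single]
  exact HasDerivAt.fun_sum fun k _ => (hasDerivAt_busV_update v θ m k).const_mul (a k)

theorem hasDerivAt_lineSfr_update [Fintype nb] {nl : Type*} (C Yf : Matrix nl nb ℂ) (l : nl) :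
    HasDerivAt (fun t : ℝ => lineSfr C Yf v (Function.update θ m t) l)
      (Complex.I *
        (C l m * busV v θ m * (starRingEnd ℂ) (lineIfr Yf v θ l)
          - (∑ k, C l k * busV v θ k) * (starRingEnd ℂ) (Yf l m) *
              (starRingEnd ℂ) (busV v θ m))) (θ m) := by
  have hS := (hasDerivAt_sum_mul_busV_update v θ m (C l)).fun_mul
    (hasDerivAt_sum_mul_busV_update v θ m (Yf l)).star
  rw [Function.update_eq_self] at hS
  refine hS.congr_deriv ?_
  simp only [lineIfr, Complex.star_def, map_mul, Complex.conj_I]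
  ring

end AngleUpdate

/-- Partial derivative of the squared apparent from-end power flow `|S^fr_l|²`
(`normSq z = (re z)² + (im z)²`) with respect to the voltage angle `θ_m`. -/
theorem hasDerivAt_lineSfr_normSq_angle {nl nb : Type*} [Fintype nb] [DecidableEq nb]
    (C Yf : Matrix nl nb ℂ) (v θ : nb → ℝ) (l : nl) (m : nb) :
    HasDerivAt (fun t : ℝ => Complex.normSq (lineSfr C Yf v (Function.update θ m t) l))
      (2 * ((starRingEnd ℂ) (lineSfr C Yf v θ l) *
          (Complex.I *
            (C l m * busV v θ m * (starRingEnd ℂ) (lineIfr Yf v θ l)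
              - (∑ k, C l k * busV v θ k) * (starRingEnd ℂ) (Yf l m) *
                  (starRingEnd ℂ) (busV v θ m)))).re)
      (θ m) := by
  simpa using Complex.hasDerivAt_normSq (hasDerivAt_lineSfr_update v θ m C Yf l)
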